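/- arXiv:2502.05298 — 2 statements merged into one kernel-verified Lean document; each statement's English description precedes it below -/
import Mathlib

section
/- Let α, β ∈ ℝ and suppose |α - a/q| < 1/q² and |α - a'/q'| ≤ 1/(q' X^{1/2}) with gcd(a,q) = gcd(a',q') = 1, q' ≤ X^{1/2}, and q > 2q'. Then a/q ≠ a'/q' and |αq' - a'| > 1/(2q). -/
/-- If `q > 2q'` then the two rational approximations are distinct
and `|αq' - a'| > 1/(2q)`. -/
theorem stmt_12 (α : ℝ) (a a' : ℤ) (q q' : ℕ) (hq : 0 < q) (hq' : 0 < q')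
    (ha : Int.gcd a q = 1) (ha' : Int.gcd a' q' = 1) (X : ℝ) (hX : 1 ≤ X)
    (h1 : |α - a / q| < 1 / (q : ℝ) ^ 2)
    (h2 : |α - a' / q'| ≤ 1 / ((q' : ℝ) * Real.sqrt X))
    (h3 : (q' : ℝ) ≤ Real.sqrt X) (h4 : 2 * q' < q) :
    (a : ℝ) / q ≠ (a' : ℝ) / q' ∧ 1 / (2 * (q : ℝ)) < |α * q' - a'| := by
  have hq0 : (0:ℝ) < q := by exact_mod_cast hq
  have hq'0 : (0:ℝ) < q' := by exact_mod_cast hq'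
  have hne : (a : ℝ) / q ≠ (a' : ℝ) / q' := by
    intro h
    have hZ : a * (q' : ℤ) = a' * q := by
      have := (div_eq_div_iff hq0.ne' hq'0.ne').mp h
      exact_mod_cast this
    have hcop : IsCoprime (a : ℤ) (q : ℤ) := Int.isCoprime_iff_gcd_eq_one.mpr ha
    have hcop' : IsCoprime (a' : ℤ) (q' : ℤ) := Int.isCoprime_iff_gcd_eq_one.mpr ha'
    have hd1 : (q : ℤ) ∣ (q' : ℤ) := by
      have hdvd : (q : ℤ) ∣ a * q' := ⟨a', by linarith⟩
      exact hcop.symm.dvd_of_dvd_mul_left hdvd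
    have hd2 : (q' : ℤ) ∣ (q : ℤ) := by
      have hdvd : (q' : ℤ) ∣ a' * q := ⟨a, by linarith⟩
      exact hcop'.symm.dvd_of_dvd_mul_left hdvd
    have : (q : ℤ) = q' := Int.dvd_antisymm (by positivity) (by positivity) hd1 hd2
    have hqq : q = q' := by exact_mod_cast this
    omega
  refine ⟨hne, ?_⟩
  set D : ℤ := a * q' - a' * q with hD
  have hDne : D ≠ 0 := by
    intro h0
    apply hne
    have : (a : ℤ) * q' = a' * q := by omega
    have : (a : ℝ) * q' = a' * q := by exact_mod_cast this
    field_simp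
    linarith
  have hD1 : (1:ℝ) ≤ |(D : ℝ)| := by
    have : (1:ℤ) ≤ |D| := Int.one_le_abs hDne
    calc (1:ℝ) = ((1:ℤ):ℝ) := by norm_num
    _ ≤ |((D:ℤ):ℝ)| := by rw [← Int.cast_abs]; exact_mod_cast this
  have hfrac : (a : ℝ) / q - a' / q' = (D : ℝ) / (q * q') := by
    push_cast [hD]
    field_simp
  have hgap : 1 / ((q:ℝ) * q') ≤ |(a : ℝ) / q - a' / q'| := by
    rw [hfrac, abs_div, abs_of_pos (by positivity : (0:ℝ) < (q:ℝ)*q')]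
    apply div_le_div_of_nonneg_right hD1 (by positivity) |>.trans_eq rfl
  have htri : |(a : ℝ) / q - a' / q'| ≤ |α - a / q| + |α - a' / q'| := by
    calc |(a : ℝ) / q - a' / q'| = |-(α - a/q) + (α - a'/q')| := by ring_nf
      _ ≤ |-(α - (a:ℝ)/q)| + |α - a'/q'| := abs_add_le _ _
      _ = |α - (a:ℝ)/q| + |α - a'/q'| := by rw [abs_neg]
  have hlow : 1 / ((q:ℝ) * q') - 1 / (q:ℝ)^2 < |α - a' / q'| := by
    linarith
  have heq : |α * q' - a'| = |α - a' / q'| * q' := by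
    rw [← abs_of_pos hq'0, ← abs_mul]
    congr 1
    field_simp
    rw [abs_of_pos hq'0]; ring
  rw [heq]
  have h4' : 2 * (q':ℝ) < q := by exact_mod_cast h4
  have key : (1 / ((q:ℝ) * q') - 1 / (q:ℝ)^2) * q' ≤ |α - a' / q'| * q' := by
    nlinarith
  have : 1 / (2 * (q:ℝ)) < (1 / ((q:ℝ) * q') - 1 / (q:ℝ)^2) * q' := by
    rw [div_lt_iff₀ (by positivity)]
    have expand : (1 / ((q:ℝ) * q') - 1 / (q:ℝ)^2) * q' * (2*q) = 2 - 2*q'/q := by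
      field_simp
    rw [expand]
    have : 2*(q':ℝ)/q < 1 := by rw [div_lt_one hq0]; linarith
    linarith
  calc 1 / (2 * (q:ℝ)) < (1 / ((q:ℝ) * q') - 1 / (q:ℝ)^2) * q' := this
    _ < |α - a' / q'| * q' := by nlinarith
end

section
/- For any real α, any integer a, and positive integer q with gcd(a,q)=1 and |α − a/q| ≤ 1/q², the sum Σ_{n ≤ M} min(X/n, ‖αn‖^{-1}) ≪ (X/(q + X|αq−a|) + M + q + X|αq−a|) log(2X), for 1 ≤ M ≤ X, where ‖t‖ denotes the distance from t to the nearest integer. -/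
open Finset Real

/-- Harmonic bound: ∑_{i=1}^m 1/i ≤ 1 + log m. -/
lemma harm_le (m : ℕ) : ∑ i ∈ Finset.Icc 1 m, (1 : ℝ) / i ≤ 1 + Real.log m := by
  induction m with
  | zero => simp
  | succ m ih =>
    rcases Nat.eq_zero_or_pos m with hm | hm
    · subst hm; simp
    rw [Finset.sum_Icc_succ_top (by omega : 1 ≤ m + 1)]
    have hlog : Real.log m + 1 / (m + 1) ≤ Real.log (m + 1) := by
      have h1 : Real.log ((m : ℝ) / (m + 1)) ≤ (m : ℝ) / (m + 1) - 1 :=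
        Real.log_le_sub_one_of_pos (by positivity)
      have h2 : Real.log ((m : ℝ) / (m + 1)) = Real.log m - Real.log (m + 1) := by
        rw [Real.log_div (by positivity) (by positivity)]
      have h3 : (m : ℝ) / (m + 1) - 1 = -(1 / (m + 1)) := by field_simp; ring
      rw [h2, h3] at h1; linarith
    push_cast
    push_cast at ih
    linarith

/-- Sum of reciprocals of distinct positive naturals. -/
lemma sum_inv_distinct (T : Finset ℕ) (hT : ∀ k ∈ T, k ≠ 0) :
    ∑ k ∈ T, (1 : ℝ) / k ≤ ∑ i ∈ Finset.Icc 1 T.card, (1 : ℝ) / i := by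
  induction T using Finset.strongInduction with
  | _ T ih =>
    rcases T.eq_empty_or_nonempty with rfl | hne
    · simp
    · have hmax := T.max'_mem hne
      set t := T.max' hne with ht
      have hcard : T.card ≤ t := by
        have : T ⊆ Finset.Icc 1 t := by
          intro k hk
          exact Finset.mem_Icc.mpr ⟨Nat.one_le_iff_ne_zero.mpr (hT k hk), T.le_max' k hk⟩
        simpa [Nat.Icc_eq_range'] using Finset.card_le_card this
      have herase := ih (T.erase t) (Finset.erase_ssubset hmax)
        (fun k hk => hT k (Finset.mem_of_mem_erase hk))
      have hcard' : (T.erase t).card = T.card - 1 := Finset.card_erase_of_mem hmax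
      have hc1 : 1 ≤ T.card := Finset.card_pos.mpr hne
      calc ∑ k ∈ T, (1 : ℝ) / k = ∑ k ∈ T.erase t, (1 : ℝ) / k + 1 / t := by
            rw [Finset.sum_erase_add T _ hmax]
        _ ≤ ∑ i ∈ Finset.Icc 1 (T.card - 1), (1 : ℝ) / i + 1 / T.card := by
            rw [hcard'] at herase
            have h1t : (1 : ℝ) / t ≤ 1 / T.card := by
              apply one_div_le_one_div_of_le
              · exact_mod_cast hc1
              · exact_mod_cast hcard
            linarith
        _ = ∑ i ∈ Finset.Icc 1 T.card, (1 : ℝ) / i := by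
            have : T.card = (T.card - 1) + 1 := by omega
            rw [this, Finset.sum_Icc_succ_top (by omega)]
            push_cast
            ring

lemma sum_inv_le_log (T : Finset ℕ) (m : ℕ) (h0 : ∀ k ∈ T, k ≠ 0) (hcard : T.card ≤ m) :
    ∑ k ∈ T, (1 : ℝ) / k ≤ 1 + Real.log m := by
  calc ∑ k ∈ T, (1 : ℝ) / k ≤ ∑ i ∈ Finset.Icc 1 T.card, (1 : ℝ) / i := sum_inv_distinct T h0
    _ ≤ ∑ i ∈ Finset.Icc 1 m, (1 : ℝ) / i := by
        apply Finset.sum_le_sum_of_subset_of_nonneg (Finset.Icc_subset_Icc_right hcard)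
        intro i _ _; positivity
    _ ≤ 1 + Real.log m := harm_le m


set_option maxHeartbeats 2000000 in
lemma key (α : ℝ) (a : ℤ) (q : ℕ) (hq : 0 < q) (hco : Int.gcd a q = 1)
    (hb : |α * q - a| ≤ 1 / q) (X M : ℝ) (hM1 : 1 ≤ M) (hMX : M ≤ X) :
    ∑ n ∈ Finset.Icc 1 ⌊M⌋₊, min (X / n) (|α * n - round (α * n)|)⁻¹ ≤
      20 * (X / q + M + (q : ℝ) + X * |α * q - a|) * (1 + Real.log X) := by
  classical
  have hX1 : (1:ℝ) ≤ X := hM1.trans hMX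
  have hq0 : (0:ℝ) < q := by exact_mod_cast hq
  set M₀ := ⌊M⌋₊ with hM₀
  have hM₀1 : 1 ≤ M₀ := Nat.le_floor (by exact_mod_cast hM1)
  have hM₀M : (M₀:ℝ) ≤ M := Nat.floor_le (by linarith)
  set β := α * q - a with hbdef
  set t : ℕ → ℝ := fun n => min (X / n) (|α * n - round (α * n)|)⁻¹ with htdef
  have ht_nonneg : ∀ n : ℕ, 0 ≤ t n := by
    intro n; apply le_min
    · positivity
    · positivity
  set c : ℕ → ℤ := fun n => a * n - q * round (α * n) with hcdef
  set jj : ℕ → ℕ := fun n => (n - 1) / q with hjdef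
  set g : ℕ → ℤ := fun j => round (β * j * q) with hgdef
  set v : ℕ → ℤ := fun n => c n + g (jj n) with hvdef
  have hβq : |β| * q ≤ 1 := by
    calc |β| * q ≤ (1/q) * q := by gcongr
      _ = 1 := by field_simp
  have hid : ∀ n : ℕ, (q:ℝ) * (α * n - round (α * n)) = (c n : ℝ) + β * n := by
    intro n; simp only [hcdef, hbdef]; push_cast; ring
  have habs : ∀ n : ℕ, |α * n - round (α * n)| = |(c n : ℝ) + β * n| / q := by
    intro n
    have h := hid n
    have h2 : α * n - round (α * n) = ((c n : ℝ) + β * n) / q := by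
      field_simp
      linarith [h]
    rw [h2, abs_div, abs_of_pos hq0]
  have hblock : ∀ n ∈ Finset.Icc 1 M₀, jj n * q + 1 ≤ n ∧ n ≤ jj n * q + q := by
    intro n hn
    have hn1 : 1 ≤ n := (Finset.mem_Icc.mp hn).1
    have h1 := Nat.div_add_mod (n-1) q
    rw [mul_comm] at h1
    have h2 := Nat.mod_lt (n-1) hq
    simp only [hjdef]
    omega
  have hε : ∀ n ∈ Finset.Icc 1 M₀, |((c n : ℝ) + β * n) - v n| ≤ 3/2 := by
    intro n hn
    obtain ⟨h1, h2⟩ := hblock n hn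
    have e1 : |β * (jj n) * q - g (jj n)| ≤ 1/2 := abs_sub_round _
    have c1 : (jj n : ℝ) * q + 1 ≤ (n : ℝ) := by exact_mod_cast h1
    have c2 : (n:ℝ) ≤ (jj n : ℝ) * q + q := by exact_mod_cast h2
    have e2 : |β * ((n:ℝ) - jj n * q)| ≤ 1 := by
      rw [abs_mul]
      have habs2 : |(n:ℝ) - jj n * q| ≤ q := by
        rw [abs_of_nonneg (by linarith)]
        linarith
      calc |β| * |(n:ℝ) - jj n * q| ≤ |β| * q := by gcongr
        _ ≤ 1 := by linarith [hβq]
    have heq : ((c n : ℝ) + β * n) - v n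
        = (β * (jj n) * q - g (jj n)) + β * ((n:ℝ) - jj n * q) := by
      simp only [hvdef]; push_cast; ring
    rw [heq]
    calc |β * (jj n) * q - g (jj n) + β * ((n:ℝ) - jj n * q)|
        ≤ |β * (jj n) * q - g (jj n)| + |β * ((n:ℝ) - jj n * q)| := abs_add_le _ _
      _ ≤ 3/2 := by linarith
  have hnatAbs : ∀ n : ℕ, ((v n).natAbs : ℝ) = |(v n : ℝ)| := by
    intro n; rw [Nat.cast_natAbs]; push_cast; ring
  have hgood : ∀ n ∈ Finset.Icc 1 M₀, 3 ≤ (v n).natAbs → t n ≤ 2 * q / (v n).natAbs := by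
    intro n hn h3
    have hv3 : (3:ℝ) ≤ |(v n : ℝ)| := by
      rw [← hnatAbs]; exact_mod_cast h3
    have he := hε n hn
    have hlow : |(v n:ℝ)| - 3/2 ≤ |(c n:ℝ) + β * n| := by
      have := abs_sub_abs_le_abs_sub ((v n : ℝ)) ((c n:ℝ) + β * n)
      rw [abs_sub_comm] at this
      linarith
    have habs' : (|(v n:ℝ)| / 2) / q ≤ |α * n - round (α * n)| := by
      rw [habs n]
      gcongr
      linarith
    have h0 : 0 < (|(v n:ℝ)| / 2) / q := by
      apply div_pos (by linarith) hq0
    calc t n ≤ (|α * n - round (α * n)|)⁻¹ := min_le_right _ _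
      _ ≤ ((|(v n:ℝ)| / 2) / q)⁻¹ := by
          apply inv_anti₀ h0 habs'
      _ = 2 * q / |(v n:ℝ)| := by
          rw [div_div, inv_div]
      _ = 2 * q / ((v n).natAbs : ℝ) := by rw [hnatAbs]
  have hcop : IsCoprime (q:ℤ) a := by
    rw [Int.isCoprime_iff_gcd_eq_one, Int.gcd_comm]; exact hco
  have hinj : ∀ n ∈ Finset.Icc 1 M₀, ∀ n' ∈ Finset.Icc 1 M₀,
      jj n = jj n' → v n = v n' → n = n' := by
    intro n hn n' hn' hj hv
    have hc : c n = c n' := by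
      simp only [hvdef, hj] at hv
      omega
    have hdvd : (q:ℤ) ∣ a * ((n:ℤ) - n') := by
      refine ⟨round (α * n) - round (α * n'), ?_⟩
      simp only [hcdef] at hc
      ring_nf
      ring_nf at hc
      linarith [hc]
    have hdvd2 : (q:ℤ) ∣ ((n:ℤ) - n') := hcop.dvd_of_dvd_mul_left hdvd
    obtain ⟨a1, b1⟩ := hblock n hn
    obtain ⟨a2, b2⟩ := hblock n' hn'
    rw [hj] at a1 b1
    have hlt : |(n:ℤ) - n'| < q := by
      rw [abs_lt]; constructor <;> push_cast <;> omega
    have := Int.eq_zero_of_abs_lt_dvd hdvd2 hlt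
    omega
  -- Summation setup
  set J := (M₀ - 1) / q with hJdef
  have hmaps : ∀ n ∈ Finset.Icc 1 M₀, jj n ∈ Finset.range (J+1) := by
    intro n hn
    rw [Finset.mem_range]
    have hn2 := (Finset.mem_Icc.mp hn).2
    have : jj n ≤ J := Nat.div_le_div_right (by omega)
    omega
  rw [← Finset.sum_fiberwise_of_maps_to hmaps]
  set B : ℕ → Finset ℕ := fun j => (Finset.Icc 1 M₀).filter (fun n => jj n = j) with hBdef
  set Gd : ℕ → Finset ℕ := fun j => (B j).filter (fun n => 3 ≤ (v n).natAbs) with hGdef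
  set Bd : ℕ → Finset ℕ := fun j => (B j).filter (fun n => ¬ 3 ≤ (v n).natAbs) with hBddef
  have hBsub : ∀ j, B j ⊆ Finset.Icc 1 M₀ := fun j => Finset.filter_subset _ _
  have hsplit : ∀ j, ∑ n ∈ B j, t n = ∑ n ∈ Gd j, t n + ∑ n ∈ Bd j, t n :=
    fun j => (Finset.sum_filter_add_sum_filter_not _ _ _).symm
  -- good fibers
  have hfiber_good : ∀ j, ∑ n ∈ Gd j, t n ≤ 4 * q * (1 + Real.log M₀) := by
    intro j
    have hstep1 : ∑ n ∈ Gd j, t n ≤ ∑ n ∈ Gd j, 2 * q * (1 / ((v n).natAbs : ℝ)) := by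
      apply Finset.sum_le_sum
      intro n hn
      have hn' := Finset.mem_filter.mp hn
      have := hgood n (hBsub j hn'.1) hn'.2
      rw [mul_one_div]
      exact this
    have hstep2 : ∑ n ∈ Gd j, (1 / ((v n).natAbs : ℝ)) ≤ 2 * (1 + Real.log M₀) := by
      rw [← Finset.sum_filter_add_sum_filter_not (Gd j) (fun n => 0 < v n)]
      have hpart : ∀ (P : Finset ℕ), P ⊆ Gd j → (Set.InjOn (fun n => (v n).natAbs) P) →
          ∑ n ∈ P, (1 / ((v n).natAbs : ℝ)) ≤ 1 + Real.log M₀ := by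
        intro P hP hinjP
        have himg : ∑ k ∈ P.image (fun n => (v n).natAbs), (1:ℝ)/(k:ℝ)
            = ∑ n ∈ P, (1:ℝ)/(((v n).natAbs):ℝ) :=
          Finset.sum_image (fun x hx y hy h => hinjP hx hy h)
        rw [← himg]
        apply sum_inv_le_log
        · intro k hk
          obtain ⟨n, hn, rfl⟩ := Finset.mem_image.mp hk
          have := (Finset.mem_filter.mp (hP hn)).2
          omega
        · calc (P.image (fun n => (v n).natAbs)).card ≤ P.card := Finset.card_image_le
            _ ≤ (Finset.Icc 1 M₀).card := Finset.card_le_card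
                (fun n hn => hBsub j (Finset.filter_subset _ _ (hP hn)))
            _ = M₀ := by rw [Nat.card_Icc]; omega
      have hinj' : ∀ (P : Finset ℕ), P ⊆ Gd j → (∀ n ∈ P, ∀ n' ∈ P,
          (0 < v n ↔ 0 < v n')) → Set.InjOn (fun n => (v n).natAbs) P := by
        intro P hP hsgn n hn n' hn' heq
        have h1 := Finset.mem_filter.mp (hP hn)
        have h2 := Finset.mem_filter.mp (hP hn')
        have hj1 := (Finset.mem_filter.mp h1.1).2
        have hj2 := (Finset.mem_filter.mp h2.1).2
        apply hinj n (hBsub j h1.1) n' (hBsub j h2.1) (hj1.trans hj2.symm)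
        have := hsgn n hn n' hn'
        simp only at heq
        omega
      have hA := hpart ((Gd j).filter (fun n => 0 < v n)) (Finset.filter_subset _ _)
        (hinj' _ (Finset.filter_subset _ _)
        (by intro n hn n' hn'
            have := (Finset.mem_filter.mp hn).2
            have := (Finset.mem_filter.mp hn').2
            tauto))
      have hB2 := hpart ((Gd j).filter (fun n => ¬ 0 < v n)) (Finset.filter_subset _ _)
        (hinj' _ (Finset.filter_subset _ _)
        (by intro n hn n' hn'
            have := (Finset.mem_filter.mp hn).2
            have := (Finset.mem_filter.mp hn').2
            tauto))
      linarith
    calc ∑ n ∈ Gd j, t n ≤ ∑ n ∈ Gd j, 2 * q * (1 / ((v n).natAbs : ℝ)) := hstep1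
      _ = 2 * q * ∑ n ∈ Gd j, (1 / ((v n).natAbs : ℝ)) := by rw [Finset.mul_sum]
      _ ≤ 2 * q * (2 * (1 + Real.log M₀)) := by
          apply mul_le_mul_of_nonneg_left hstep2 (by positivity)
      _ = 4 * q * (1 + Real.log M₀) := by ring
  -- bad sets are small
  have hBdcard : ∀ j, (Bd j).card ≤ 5 := by
    intro j
    have : (Bd j).card ≤ (Finset.Icc (-2 : ℤ) 2).card := by
      apply Finset.card_le_card_of_injOn v
      · intro n hn
        have h1 := Finset.mem_filter.mp hn
        have h2 := h1.2
        rw [Finset.mem_coe, Finset.mem_Icc]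
        omega
      · intro n hn n' hn' heq
        have h1 := Finset.mem_filter.mp hn
        have h2 := Finset.mem_filter.mp hn'
        have hj1 := (Finset.mem_filter.mp h1.1).2
        have hj2 := (Finset.mem_filter.mp h2.1).2
        exact hinj n (hBsub j h1.1) n' (hBsub j h2.1) (hj1.trans hj2.symm) heq
    simpa using this
  have hfiber_bad_pos : ∀ j, 1 ≤ j → ∑ n ∈ Bd j, t n ≤ 5 * (X / ((j:ℝ) * q)) := by
    intro j hj
    have hjq : (0:ℝ) < (j:ℝ) * q := by
      have : (1:ℝ) ≤ (j:ℝ) := by exact_mod_cast hj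
      nlinarith
    have hpt : ∀ n ∈ Bd j, t n ≤ X / ((j:ℝ) * q) := by
      intro n hn
      have h1 := Finset.mem_filter.mp hn
      obtain ⟨hb1, hb2⟩ := hblock n (hBsub j h1.1)
      have hjn : jj n = j := (Finset.mem_filter.mp h1.1).2
      have hjq_le : (j:ℝ) * q ≤ (n:ℝ) := by
        rw [hjn] at hb1
        have : (j * q + 1 : ℝ) ≤ (n:ℝ) := by exact_mod_cast hb1
        push_cast at this ⊢
        linarith
      calc t n ≤ X / n := min_le_left _ _
        _ ≤ X / ((j:ℝ) * q) := by
            apply div_le_div_of_nonneg_left (by linarith) hjq hjq_le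
    calc ∑ n ∈ Bd j, t n ≤ (Bd j).card • (X / ((j:ℝ) * q)) :=
          Finset.sum_le_card_nsmul _ _ _ hpt
      _ = ((Bd j).card : ℝ) * (X / ((j:ℝ) * q)) := by rw [nsmul_eq_mul]
      _ ≤ 5 * (X / ((j:ℝ) * q)) := by
          apply mul_le_mul_of_nonneg_right _ (by positivity)
          exact_mod_cast hBdcard j
  -- bad fiber at j = 0
  have hfiber_bad_zero : ∑ n ∈ Bd 0, t n ≤ X / q + 8 * q + 8 * (X * |β|) := by
    have hg0 : g 0 = 0 := by simp [hgdef]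
    have hv0 : ∀ n, jj n = 0 → v n = c n := by
      intro n hn; simp only [hvdef, hn, hg0, add_zero]
    rw [← Finset.sum_filter_add_sum_filter_not (Bd 0) (fun n => c n = 0)]
    have hP1 : ∑ n ∈ (Bd 0).filter (fun n => c n = 0), t n ≤ X / q := by
      have hsub : (Bd 0).filter (fun n => c n = 0) ⊆ {q} := by
        intro n hn
        have h1 := Finset.mem_filter.mp hn
        have hc0 : c n = 0 := h1.2
        have h2 := Finset.mem_filter.mp h1.1
        have hjn : jj n = 0 := (Finset.mem_filter.mp h2.1).2
        have hmem := hBsub 0 h2.1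
        obtain ⟨hb1, hb2⟩ := hblock n hmem
        rw [hjn] at hb2
        have hn1 : 1 ≤ n := (Finset.mem_Icc.mp hmem).1
        have hdvd : (q:ℤ) ∣ a * (n:ℤ) := by
          refine ⟨round (α * n), ?_⟩
          simp only [hcdef] at hc0
          linarith [hc0]
        have hdvd2 : (q:ℤ) ∣ (n:ℤ) := hcop.dvd_of_dvd_mul_left hdvd
        have hdvd3 : q ∣ n := by exact_mod_cast hdvd2
        have : n = q := by
          have := Nat.le_of_dvd (by omega) hdvd3
          omega
        simp [this]
      calc ∑ n ∈ (Bd 0).filter (fun n => c n = 0), t n ≤ ∑ n ∈ {q}, t n := by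
            apply Finset.sum_le_sum_of_subset_of_nonneg hsub
            intro n _ _; exact ht_nonneg n
        _ = t q := Finset.sum_singleton _ _
        _ ≤ X / q := min_le_left _ _
    have hP2 : ∑ n ∈ (Bd 0).filter (fun n => ¬ c n = 0), t n ≤ 8 * q + 8 * (X * |β|) := by
      have hpt : ∀ n ∈ (Bd 0).filter (fun n => ¬ c n = 0), t n ≤ 2 * q + 2 * (X * |β|) := by
        intro n hn
        have h1 := Finset.mem_filter.mp hn
        have hcne : c n ≠ 0 := h1.2
        have h2 := Finset.mem_filter.mp h1.1
        have hmem := hBsub 0 h2.1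
        have hn1 : 1 ≤ n := (Finset.mem_Icc.mp hmem).1
        have hn1' : (1:ℝ) ≤ (n:ℝ) := by exact_mod_cast hn1
        by_cases hcase : |β| * n ≤ 1/2
        · have hc1 : (1:ℝ) ≤ |(c n : ℝ)| := by
            have h1abs : (1:ℤ) ≤ |c n| := Int.one_le_abs hcne
            have h2abs : ((1:ℤ):ℝ) ≤ ((|c n| : ℤ) : ℝ) := by exact_mod_cast h1abs
            rw [Int.cast_abs] at h2abs
            simpa using h2abs
          have hβn : |β * n| ≤ 1/2 := by
            rw [abs_mul, abs_of_nonneg (by positivity : (0:ℝ) ≤ (n:ℝ))]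
            exact hcase
          have h2' : 1/2 ≤ |(c n:ℝ) + β * n| := by
            have habs3 := abs_add_le ((c n:ℝ) + β * n) (- (β * n))
            simp only [add_neg_cancel_right, abs_neg] at habs3
            linarith
          have hlow : (1/2) / q ≤ |α * n - round (α * n)| := by
            rw [habs n]
            gcongr
          have h0 : (0:ℝ) < (1/2) / q := by positivity
          have hXβ : (0:ℝ) ≤ X * |β| := by positivity
          calc t n ≤ (|α * n - round (α * n)|)⁻¹ := min_le_right _ _
            _ ≤ (((1:ℝ)/2) / q)⁻¹ := inv_anti₀ h0 hlow
            _ = 2 * q := by rw [div_div, one_div, inv_inv]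
            _ ≤ 2 * q + 2 * (X * |β|) := by linarith

        · push_neg at hcase
          have hβpos : 0 < |β| := by nlinarith
          have hn0 : (0:ℝ) < (n:ℝ) := by linarith
          calc t n ≤ X / n := min_le_left _ _
            _ ≤ 2 * (X * |β|) := by
                rw [div_le_iff₀ hn0]
                nlinarith
            _ ≤ 2 * q + 2 * (X * |β|) := by
                have hq2 : (0:ℝ) ≤ 2 * q := by positivity
                linarith
      have hcard2 : ((Bd 0).filter (fun n => ¬ c n = 0)).card ≤ 5 :=
        le_trans (Finset.card_le_card (Finset.filter_subset _ _)) (hBdcard 0)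
      calc ∑ n ∈ (Bd 0).filter (fun n => ¬ c n = 0), t n
          ≤ ((Bd 0).filter (fun n => ¬ c n = 0)).card • (2 * (q:ℝ) + 2 * (X * |β|)) :=
            Finset.sum_le_card_nsmul _ _ _ hpt
        _ = (((Bd 0).filter (fun n => ¬ c n = 0)).card : ℝ) * (2 * q + 2 * (X * |β|)) := by
            rw [nsmul_eq_mul]
        _ ≤ 4 * (2 * q + 2 * (X * |β|)) := by
            apply mul_le_mul_of_nonneg_right _ (by positivity)
            have hcard4 : ((Bd 0).filter (fun n => ¬ c n = 0)).card ≤ 4 := by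
              have hle : ((Bd 0).filter (fun n => ¬ c n = 0)).card
                  ≤ ((Finset.Icc (-2 : ℤ) 2).erase 0).card := by
                apply Finset.card_le_card_of_injOn v
                · intro n hn
                  have h1 := Finset.mem_filter.mp hn
                  have h2 := Finset.mem_filter.mp h1.1
                  have hjn : jj n = 0 := (Finset.mem_filter.mp h2.1).2
                  have hvc : v n = c n := hv0 n hjn
                  have hna := h2.2
                  rw [Finset.mem_coe, Finset.mem_erase, Finset.mem_Icc]
                  refine ⟨by rw [hvc]; exact h1.2, by omega, by omega⟩
                · intro n hn n' hn' heq
                  have h1 := Finset.mem_filter.mp hn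
                  have h2 := Finset.mem_filter.mp hn'
                  have g1 := Finset.mem_filter.mp h1.1
                  have g2 := Finset.mem_filter.mp h2.1
                  have hj1 := (Finset.mem_filter.mp g1.1).2
                  have hj2 := (Finset.mem_filter.mp g2.1).2
                  exact hinj n (hBsub 0 g1.1) n' (hBsub 0 g2.1) (hj1.trans hj2.symm) heq
              simpa using hle
            exact_mod_cast hcard4
        _ = 8 * q + 8 * (X * |β|) := by ring
    linarith
  -- assemble
  have hlogX0 : 0 ≤ Real.log X := Real.log_nonneg hX1
  have hL1 : (1:ℝ) ≤ 1 + Real.log X := by linarith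
  have hsum_eq : ∑ j ∈ Finset.range (J+1), ∑ n ∈ B j, t n
      = ∑ j ∈ Finset.range (J+1), ∑ n ∈ Gd j, t n
        + ∑ j ∈ Finset.range (J+1), ∑ n ∈ Bd j, t n := by
    rw [← Finset.sum_add_distrib]
    exact Finset.sum_congr rfl (fun j _ => hsplit j)
  have hlogM₀ : Real.log M₀ ≤ Real.log X := by
    apply Real.log_le_log (by exact_mod_cast hM₀1)
    exact hM₀M.trans (hMX)
  have hgt : ∑ j ∈ Finset.range (J+1), ∑ n ∈ Gd j, t n
      ≤ 4 * (M + q) * (1 + Real.log X) := by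
    have h1 : ∑ j ∈ Finset.range (J+1), ∑ n ∈ Gd j, t n
        ≤ (J+1) • (4 * (q:ℝ) * (1 + Real.log M₀)) := by
      have := Finset.sum_le_card_nsmul (Finset.range (J+1))
        (fun j => ∑ n ∈ Gd j, t n) (4 * (q:ℝ) * (1 + Real.log M₀))
        (fun j _ => hfiber_good j)
      simpa using this
    rw [nsmul_eq_mul] at h1
    have hJq : ((J:ℝ)+1) * q ≤ M + q := by
      have h2 : J * q + 1 ≤ M₀ := by
        have := Nat.div_mul_le_self (M₀ - 1) q
        simp only [hJdef]
        omega
      have h3 : ((J * q + 1 : ℕ) : ℝ) ≤ (M₀ : ℝ) := Nat.cast_le.mpr h2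
      push_cast at h3
      have hq0' : (0:ℝ) ≤ (q:ℝ) := le_of_lt hq0
      nlinarith [hM₀M]
    have hMlog : 1 + Real.log (M₀:ℝ) ≤ 1 + Real.log X := by linarith
    have hMlog0 : 0 ≤ 1 + Real.log (M₀:ℝ) := by
      have : (0:ℝ) ≤ Real.log M₀ := Real.log_nonneg (by exact_mod_cast hM₀1)
      linarith
    calc ∑ j ∈ Finset.range (J+1), ∑ n ∈ Gd j, t n
        ≤ ((J:ℝ)+1) * (4 * q * (1 + Real.log M₀)) := by push_cast at h1 ⊢; linarith
      _ = 4 * (((J:ℝ)+1) * q) * (1 + Real.log M₀) := by ring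
      _ ≤ 4 * (M + q) * (1 + Real.log X) := by
          apply mul_le_mul _ hMlog hMlog0 (by positivity)
          gcongr
  have hbt : ∑ j ∈ Finset.range (J+1), ∑ n ∈ Bd j, t n
      ≤ (X/q + 8*q + 8*(X*|β|)) + 5*(X/q)*(1 + Real.log X) := by
    have hrange : Finset.range (J+1) = insert 0 (Finset.Ico 1 (J+1)) := by
      rw [Finset.range_eq_Ico, ← Finset.insert_Ico_add_one_left_eq_Ico (Nat.succ_pos J)]; rfl
    rw [hrange, Finset.sum_insert (by simp)]
    have htail : ∑ j ∈ Finset.Ico 1 (J+1), ∑ n ∈ Bd j, t n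
        ≤ 5*(X/q)*(1 + Real.log X) := by
      have h1 : ∑ j ∈ Finset.Ico 1 (J+1), ∑ n ∈ Bd j, t n
          ≤ ∑ j ∈ Finset.Ico 1 (J+1), 5 * (X / ((j:ℝ) * q)) := by
        apply Finset.sum_le_sum
        intro j hj
        exact hfiber_bad_pos j (Finset.mem_Ico.mp hj).1
      have h2 : ∑ j ∈ Finset.Ico 1 (J+1), 5 * (X / ((j:ℝ) * q))
          = 5*(X/q) * ∑ j ∈ Finset.Icc 1 J, (1:ℝ)/(j:ℝ) := by
        rw [← Finset.Ico_add_one_right_eq_Icc]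
        rw [Finset.mul_sum]
        apply Finset.sum_congr rfl
        intro j hj
        have hj1 : 1 ≤ j := (Finset.mem_Ico.mp hj).1
        have hj0 : (0:ℝ) < (j:ℝ) := by exact_mod_cast hj1
        field_simp
      have h3 : ∑ j ∈ Finset.Icc 1 J, (1:ℝ)/(j:ℝ) ≤ 1 + Real.log J := harm_le J
      have h4 : Real.log (J:ℝ) ≤ Real.log X := by
        rcases Nat.eq_zero_or_pos J with hJ0 | hJ0
        · rw [hJ0]; simpa using hlogX0
        · apply Real.log_le_log (by exact_mod_cast hJ0)
          have : J ≤ M₀ := by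
            have := Nat.div_le_self (M₀ - 1) q
            omega
          have : (J:ℝ) ≤ (M₀:ℝ) := by exact_mod_cast this
          linarith [hM₀M, hMX]
      have h5 : (0:ℝ) ≤ 5*(X/q) := by positivity
      calc ∑ j ∈ Finset.Ico 1 (J+1), ∑ n ∈ Bd j, t n
          ≤ 5*(X/q) * ∑ j ∈ Finset.Icc 1 J, (1:ℝ)/(j:ℝ) := by rw [← h2]; exact h1
        _ ≤ 5*(X/q) * (1 + Real.log J) := by
            apply mul_le_mul_of_nonneg_left h3 h5
        _ ≤ 5*(X/q)*(1 + Real.log X) := by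
            apply mul_le_mul_of_nonneg_left (by linarith) h5
    linarith [hfiber_bad_zero, htail]
  have hXq0 : (0:ℝ) ≤ X / q := by positivity
  have hXβ0 : (0:ℝ) ≤ X * |β| := by positivity
  have hq1 : (1:ℝ) ≤ (q:ℝ) := by exact_mod_cast hq
  have e1 : 0 ≤ Real.log X * (X/q) := by positivity
  have e2 : 0 ≤ Real.log X * (q:ℝ) := by positivity
  have e3 : 0 ≤ Real.log X * (X * |β|) := by positivity
  have e4 : 0 ≤ Real.log X * M := by
    apply mul_nonneg hlogX0; linarith
  rw [hsum_eq]
  nlinarith [hgt, hbt, e1, e2, e3, e4, hXq0, hXβ0, hq1, hM1]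


set_option maxHeartbeats 2000000 in
/-- Amplified Vaughan Lemma 2.2:
`∑_{n ≤ M} min(X/n, ‖αn‖⁻¹) ≪ (X/(q + X|αq−a|) + M + q + X|αq−a|) log 2X`. -/
theorem stmt_18 :
    ∃ C > 0, ∀ (α : ℝ) (a : ℤ) (q : ℕ), 0 < q → Int.gcd a q = 1 →
      |α - a / q| ≤ 1 / (q : ℝ) ^ 2 →
      ∀ X M : ℝ, 1 ≤ M → M ≤ X →
        ∑ n ∈ Finset.Icc 1 ⌊M⌋₊,
            min (X / n) (|α * n - round (α * n)|)⁻¹ ≤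
          C * (X / ((q : ℝ) + X * |α * q - a|) + M + (q : ℝ) + X * |α * q - a|) *
            Real.log (2 * X) := by
  refine ⟨1000, by norm_num, ?_⟩
  intro α a q hq hco happrox X M hM1 hMX
  have hX1 : (1:ℝ) ≤ X := hM1.trans hMX
  have hX0 : (0:ℝ) < X := by linarith
  have hq0 : (0:ℝ) < q := by exact_mod_cast hq
  set β := α * q - a with hbdef
  have hb : |β| ≤ 1 / q := by
    have heq : β = (α - a / q) * q := by rw [hbdef, sub_mul, div_mul_cancel₀ _ hq0.ne']
    rw [heq, abs_mul, abs_of_pos hq0]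
    calc |α - a / q| * q ≤ (1 / q ^ 2) * q := by gcongr
      _ = 1 / q := by field_simp
  set δ := X * |β| with hδdef
  have hδ0 : 0 ≤ δ := by positivity
  set Q : ℝ := (q : ℝ) + δ with hQdef
  have hQ0 : 0 < Q := by simp only [hQdef]; linarith
  set br : ℝ := X / Q + M + (q : ℝ) + δ with hbrdef
  have hbr0 : 0 ≤ br := by
    have : 0 ≤ X / Q := by positivity
    simp only [hbrdef]; linarith
  have hlog2X0 : 0 ≤ Real.log (2 * X) := Real.log_nonneg (by linarith)
  have hlogX0 : 0 ≤ Real.log X := Real.log_nonneg hX1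
  have hlog2X : (1:ℝ) + Real.log X ≤ 2 * Real.log (2 * X) := by
    rw [Real.log_mul (by norm_num) (by linarith)]
    have h2 := Real.log_two_gt_d9
    linarith
  -- conclusion helper
  have hfinish : ∀ bk : ℝ,
      (∑ n ∈ Finset.Icc 1 ⌊M⌋₊, min (X / n) (|α * n - round (α * n)|)⁻¹
        ≤ 20 * bk * (1 + Real.log X)) → bk ≤ 5 * br →
      ∑ n ∈ Finset.Icc 1 ⌊M⌋₊, min (X / n) (|α * n - round (α * n)|)⁻¹
        ≤ 1000 * br * Real.log (2 * X) := by
    intro bk hk h5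
    have hL0 : (0:ℝ) ≤ 1 + Real.log X := by linarith
    calc ∑ n ∈ Finset.Icc 1 ⌊M⌋₊, min (X / n) (|α * n - round (α * n)|)⁻¹
        ≤ 20 * bk * (1 + Real.log X) := hk
      _ ≤ 20 * (5 * br) * (1 + Real.log X) := by
          apply mul_le_mul_of_nonneg_right (by linarith) hL0
      _ = 100 * br * (1 + Real.log X) := by ring
      _ ≤ 100 * br * (2 * Real.log (2 * X)) := by
          apply mul_le_mul_of_nonneg_left hlog2X (by linarith)
      _ = 200 * (br * Real.log (2 * X)) := by ring
      _ ≤ 1000 * (br * Real.log (2 * X)) := by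
          have : 0 ≤ br * Real.log (2 * X) := mul_nonneg hbr0 hlog2X0
          linarith
      _ = 1000 * br * Real.log (2 * X) := by ring
  by_cases hcase : δ ≤ 2 * q ∨ 1 ≤ 3 * (q:ℝ) * |β|
  · -- direct application with (a, q)
    have hkey := key α a q hq hco hb X M hM1 hMX
    apply hfinish (X / q + M + (q : ℝ) + X * |β|) hkey
    have hXQ0 : 0 ≤ X / Q := by positivity
    have hXq3 : X / (q:ℝ) ≤ 3 * (X / Q) + 3 * Q := by
      rcases hcase with h | h
      · have h1 : Q ≤ 3 * q := by simp only [hQdef]; linarith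
        have h2 : X / (3 * q) ≤ X / Q := by
          apply div_le_div_of_nonneg_left (by linarith) hQ0 h1
        have h3 : X / (q:ℝ) = 3 * (X / (3 * q)) := by field_simp
        have h4 : 0 ≤ Q := le_of_lt hQ0
        linarith
      · have h1 : X / q ≤ 3 * δ := by
          rw [div_le_iff₀ hq0, hδdef]
          nlinarith
        have h2 : δ ≤ Q := by simp only [hQdef]; linarith
        have h4 : 0 ≤ X / Q := by positivity
        linarith
    rw [← hδdef, hbrdef]
    linarith [hXq3, hXQ0, hδ0, hq0, hM1, hQdef.le, hQdef.ge]
  · -- amplification via Dirichlet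
    push_neg at hcase
    obtain ⟨hδ2q, h3qβ⟩ := hcase
    have hβpos : 0 < |β| := by
      by_contra h
      push_neg at h
      have : |β| = 0 := le_antisymm h (abs_nonneg β)
      rw [hδdef, this] at hδ2q
      nlinarith
    set N := ⌊1 / |β|⌋₊ with hNdef
    have hNq : 3 * q ≤ N := by
      apply Nat.le_floor
      push_cast
      rw [le_div_iff₀ hβpos]
      linarith
    have hN1 : 0 < N := by omega
    obtain ⟨r, hr1, hr2⟩ := Real.exists_rat_abs_sub_le_and_den_le α hN1
    set q' := r.den with hq'def
    set a' := r.num with ha'def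
    have hq'pos : 0 < q' := r.pos
    have hq'0 : (0:ℝ) < q' := by exact_mod_cast hq'pos
    have hco' : Int.gcd a' q' = 1 := by
      simpa [Int.gcd, ha'def, hq'def] using r.reduced
    have hrcast : (r : ℝ) = (a' : ℝ) / (q' : ℝ) := by
      rw [ha'def, hq'def, Rat.cast_def]
    set β' := α * q' - a' with hb'def
    have hN1R : (0:ℝ) < (N:ℝ) + 1 := by positivity
    have hβ'bound : |β'| ≤ 1 / ((N:ℝ) + 1) := by
      have h1 : |α - (a' : ℝ) / q'| ≤ 1 / (((N:ℝ) + 1) * q') := by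
        rw [← hrcast]; exact_mod_cast hr1
      have heq : β' = (α - (a' : ℝ) / q') * q' := by rw [hb'def, sub_mul, div_mul_cancel₀ _ hq'0.ne']
      rw [heq, abs_mul, abs_of_pos hq'0]
      calc |α - (a' : ℝ) / q'| * q' ≤ (1 / (((N:ℝ) + 1) * q')) * q' := by gcongr
        _ = 1 / ((N:ℝ) + 1) := by field_simp
    have hNβ : 1 / |β| < (N:ℝ) + 1 := Nat.lt_floor_add_one _
    have hβ'lt : |β'| < |β| := by
      apply lt_of_le_of_lt hβ'bound
      rw [div_lt_iff₀ hN1R]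
      rw [div_lt_iff₀ hβpos] at hNβ
      linarith
    have hb' : |α * q' - a'| ≤ 1 / q' := by
      rw [← hb'def]
      apply hβ'bound.trans
      apply div_le_div_of_nonneg_left (by norm_num) hq'0
      have : (q' : ℝ) ≤ (N : ℝ) := by exact_mod_cast hr2
      linarith
    -- lower bound on q'
    have hne : a * (q' : ℤ) - a' * (q : ℤ) ≠ 0 := by
      intro heq
      have heq' : a * (q' : ℤ) = a' * (q : ℤ) := by linarith [heq]
      have hcop : IsCoprime ((q:ℕ) : ℤ) a := by
        rw [Int.isCoprime_iff_gcd_eq_one, Int.gcd_comm]; exact hco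
      have hcop' : IsCoprime ((q':ℕ) : ℤ) a' := by
        rw [Int.isCoprime_iff_gcd_eq_one, Int.gcd_comm]; exact hco'
      have hd1 : ((q:ℕ) : ℤ) ∣ ((q':ℕ) : ℤ) := by
        apply hcop.dvd_of_dvd_mul_left
        exact ⟨a', by linarith [heq']⟩
      have hd2 : ((q':ℕ) : ℤ) ∣ ((q:ℕ) : ℤ) := by
        apply hcop'.dvd_of_dvd_mul_left
        exact ⟨a, by linarith [heq']⟩
      have hqq' : q = q' := Nat.dvd_antisymm (by exact_mod_cast hd1) (by exact_mod_cast hd2)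
      have haa' : a = a' := by
        rw [← hqq'] at heq'
        have hqne : (q : ℤ) ≠ 0 := by exact_mod_cast hq.ne'
        exact mul_right_cancel₀ hqne heq'
      rw [hb'def, ← hqq', ← haa', ← hbdef] at hβ'lt
      exact lt_irrefl _ hβ'lt
    have h1le : (1:ℝ) ≤ |(a:ℝ) * (q':ℕ) - (a':ℝ) * (q:ℕ)| := by
      exact_mod_cast Int.one_le_abs hne
    have hident : (a:ℝ) * (q':ℕ) - (a':ℝ) * (q:ℕ) = β' * (q:ℝ) - β * (q':ℝ) := by
      simp only [hb'def, hbdef]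
      ring
    have htri : (1:ℝ) ≤ |β'| * q + |β| * q' := by
      have habs2 : |β' * (q:ℝ) - β * (q':ℝ)| ≤ |β' * (q:ℝ)| + |β * (q':ℝ)| := abs_sub _ _
      rw [abs_mul, abs_mul, abs_of_pos hq0, abs_of_pos hq'0] at habs2
      rw [hident] at h1le
      linarith
    have hqN3 : (q:ℝ) ≤ (N:ℝ)/3 := by
      have : ((3 * q : ℕ) : ℝ) ≤ (N : ℝ) := by exact_mod_cast hNq
      push_cast at this
      linarith
    have hβ'q : |β'| * q ≤ 1/3 := by
      calc |β'| * q ≤ (1/((N:ℝ)+1)) * ((N:ℝ)/3) := by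
            apply mul_le_mul hβ'bound hqN3 (le_of_lt hq0) (by positivity)
        _ ≤ 1/3 := by
            rw [div_mul_div_comm, one_mul, div_le_div_iff₀ (by positivity) (by norm_num)]
            push_cast
            nlinarith [Nat.cast_nonneg (α := ℝ) N]
    have hq'low : 2/3 ≤ |β| * q' := by linarith
    have hδpos : 0 < δ := by nlinarith [hq0]
    have hXq' : X / q' ≤ (3/2) * δ := by
      rw [div_le_iff₀ hq'0, hδdef]
      nlinarith
    have hq'up : (q':ℝ) ≤ 1/|β| := by
      have h1 : (q':ℝ) ≤ (N:ℝ) := by exact_mod_cast hr2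
      have h2 : (N:ℝ) ≤ 1/|β| := Nat.floor_le (by positivity)
      linarith
    have hinv : 1/|β| = X / δ := by
      rw [hδdef]
      rw [eq_div_iff (by positivity)]
      field_simp
    have hδQ : Q ≤ (3/2) * δ := by rw [hQdef]; linarith
    have hXδQ : X/δ ≤ (3/2) * (X/Q) := by
      have h1 : X/((3/2)*δ) ≤ X/Q := by
        apply div_le_div_of_nonneg_left (by linarith) hQ0 hδQ
      have h2 : X/((3/2)*δ) = (2/3)*(X/δ) := by
        field_simp
      linarith
    have hq'Q : (q':ℝ) ≤ (3/2) * (X/Q) := by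
      rw [hinv] at hq'up
      linarith
    have hXβ' : X * |β'| ≤ δ := by
      rw [hδdef]
      nlinarith [hβ'lt.le, hX0.le]
    have hkey := key α a' q' hq'pos hco' hb' X M hM1 hMX
    rw [← hb'def] at hkey
    apply hfinish (X / q' + M + (q' : ℝ) + X * |β'|) hkey
    have hXQ0 : 0 ≤ X / Q := by positivity
    rw [hbrdef]
    linarith [hXq', hq'Q, hXβ', hXQ0, hq0, hQdef.le, hQdef.ge]
end
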